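/- arXiv:1907.02512 — 2 statements merged into one kernel-verified Lean document; each statement's English description precedes it below -/
import Mathlib

section
/- Let ⟨𝔅, ψ, (Y, ℝ, σ)⟩ be an affine cocycle over a flow (Y, ℝ, σ) with fibre a finite-dimensional Banach space 𝔅, and let ⟨(X, ℝ₊, π), (Y, ℝ, σ), h⟩ be the skew-product nonautonomous system with X := 𝔅 × Y, π(t, (u, y)) := (ψ(t, u, y), σ(t, y)), h := pr₂. Assume the point y₀ ∈ Y is positively Poisson stable and there exists u₀ ∈ 𝔅 such that {ψ(t, u₀, y₀) : t ≥ 0} is relatively compact in 𝔅. Set x₀ := (u₀, y₀). Then: (1) the ω-limit set K := ω_{x₀} ⊆ X is conditionally compact with respect to h; (2) M := cl co(K ∩ X_{y₀}) is a compact convex subset of X_{y₀} = 𝔅 × {y₀}; (3) the set ℰ⁺_{y₀} of pointwise limits on M of the maps π(t_n, ·) along sequences {t_n} ∈ 𝔑_{y₀}^{+∞} is a compact sub-semigroup of the semigroup M^M; (4) every ξ ∈ ℰ⁺_{y₀} is affine and continuous (indeed Lipschitz with a constant independent of ξ). -/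
/-!
For `t ≥ 0` the fibre map `u ↦ ψ(t, u, y₀)` is affine with linear part `φ(t, ·, y₀)`. Since `𝔅` is
finite-dimensional, restrictions to `M` of affine maps form a finite-dimensional, hence closed,
subspace of `M → 𝔅`, so every `ξ ∈ ℰ⁺_{y₀}` is such a restriction, and it is determined by its
values on a finite set `S ⊆ M` whose affine span contains `M`. Hence `ξ ∈ ℰ⁺_{y₀}` iff `ξ` is
affine and `(y₀, ξ|_S)` is a cluster point at `+∞` of `t ↦ (σ(t, y₀), ψ(t, ·, y₀)|_S)`; both
conditions are closed, so `ℰ⁺_{y₀}` is closed in the compact space `M^M`. For `ξ₁ ∘ ξ₂`, the cocycle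
identity makes each `(σ(s, y₀), ψ(s, ξ₂ ·, y₀)|_S)` a cluster point, and these tend to
`(y₀, ξ₁ ∘ ξ₂|_S)` along the sequence defining `ξ₁`. The uniform Lipschitz constant comes from a
basis of `span (M - M)` made of differences of points of `M`, on which the linear part of `ξ` is
bounded by `diam M`.
-/

open Filter Topology Set

theorem isCompact_closure_inter_preimage_snd {X Y : Type*} [TopologicalSpace X] [T2Space X]
    [TopologicalSpace Y] {C : Set X} {K : Set (X × Y)} (hC : IsCompact C) (hKC : K ⊆ C ×ˢ univ)
    {Y' : Set Y} (hY' : IsCompact (closure Y')) : IsCompact (closure (K ∩ Prod.snd ⁻¹' Y')) :=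
  (hC.prod hY').of_isClosed_subset isClosed_closure <|
    closure_minimal (fun _ hp => ⟨(hKC hp.1).1, subset_closure hp.2⟩)
      (hC.isClosed.prod isClosed_closure)

theorem exists_affineMap_eq_of_sub_eq {E F : Type*} [AddCommGroup E] [Module ℝ E]
    [AddCommGroup F] [Module ℝ F] (f : E → F) (A : E →ₗ[ℝ] F)
    (h : ∀ u v, f u - f v = A (u - v)) : ∃ g : E →ᵃ[ℝ] F, ∀ u, g u = f u :=
  ⟨AffineMap.mk' f A 0 fun u => by rw [vsub_eq_sub, ← h, vadd_eq_add, sub_add_cancel],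
    fun _ => rfl⟩

section AffineRestriction

variable {E F : Type*} [NormedAddCommGroup E] [NormedSpace ℝ E] [FiniteDimensional ℝ E]
  [NormedAddCommGroup F] [NormedSpace ℝ F]

theorem exists_finite_subset_subset_affineSpan (M : Set E) :
    ∃ S ⊆ M, S.Finite ∧ M ⊆ affineSpan ℝ S := by
  obtain ⟨S, hSM, hspan, hind⟩ := exists_affineIndependent ℝ E M
  exact ⟨S, hSM, finite_set_of_fin_dim_affineIndependent ℝ hind, hspan ▸ subset_affineSpan ℝ M⟩

theorem isClosed_setOf_exists_affineMap_eq [FiniteDimensional ℝ F] (M : Set E) :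
    IsClosed {f : M → F | ∃ g : E →ᵃ[ℝ] F, ∀ p, f p = g p} := by
  let restrict : (E →ᵃ[ℝ] F) →ₗ[ℝ] (M → F) :=
    { toFun := fun g p => g p, map_add' := fun _ _ => rfl, map_smul' := fun _ _ => rfl }
  have : FiniteDimensional ℝ (E →ᵃ[ℝ] F) :=
    (AffineMap.toConstProdLinearMap ℝ).symm.finiteDimensional
  convert (LinearMap.range restrict).closed_of_finiteDimensional using 1
  ext f
  exact exists_congr fun g => by simp [restrict, funext_iff, eq_comm]

theorem exists_lipschitz_bound_affineMap (M : Set E) :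
    ∃ C ≥ 0, ∀ (g : E →ᵃ[ℝ] F) (D : ℝ), 0 ≤ D → (∀ p ∈ M, ∀ q ∈ M, dist (g p) (g q) ≤ D) →
      ∀ p ∈ M, ∀ q ∈ M, dist (g p) (g q) ≤ C * D * dist p q := by
  obtain ⟨b, hbM, hspan, hli⟩ := exists_linearIndependent ℝ (M -ᵥ M)
  have : Finite b := hli.setFinite.to_subtype
  set W := Submodule.span ℝ (range ((↑) : b → E))
  obtain ⟨C, hC, hCu⟩ := (Module.Basis.span hli).exists_opNorm_le (F := F)
  refine ⟨C, hC.le, fun g D hD hgD p hp q hq => ?_⟩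
  let u : W →L[ℝ] F := (g.linear.comp W.subtype).toContinuousLinearMap
  have hu : ‖u‖ ≤ C * D := hCu hD fun i => by
    obtain ⟨x, hx, y, hy, hxy⟩ := hbM i.2
    calc ‖u (Module.Basis.span hli i)‖ = ‖g.linear (x -ᵥ y)‖ := by simp [u, ← hxy]
      _ ≤ D := by rw [AffineMap.linearMap_vsub, ← dist_eq_norm_vsub]; exact hgD x hx y hy
  have hpq : p - q ∈ W := by
    simp only [W, Subtype.range_coe, hspan]
    exact Submodule.subset_span (vsub_mem_vsub hp hq)
  calc dist (g p) (g q) = ‖u ⟨p - q, hpq⟩‖ := by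
        rw [dist_eq_norm_vsub, ← AffineMap.linearMap_vsub]; rfl
    _ ≤ ‖u‖ * ‖p - q‖ := u.le_opNorm _
    _ ≤ C * D * dist p q := by rw [dist_eq_norm]; gcongr

theorem continuous_of_exists_affineMap_eq {M : Set E} {N : Set F} {ξ : M → N}
    (h : ∃ g : E →ᵃ[ℝ] F, ∀ p, (ξ p : F) = g p) : Continuous ξ := by
  obtain ⟨g, hg⟩ := h
  refine continuous_induced_rng.2 ?_
  simpa only [Function.comp_def, hg] using
    g.continuous_of_finiteDimensional.comp continuous_subtype_val

end AffineRestriction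

theorem tendsto_affineMap_apply_of_mem_affineSpan {α E F : Type*} [AddCommGroup E] [Module ℝ E]
    [AddCommGroup F] [Module ℝ F] [TopologicalSpace F] [IsTopologicalAddGroup F]
    [ContinuousSMul ℝ F] {l : Filter α} {g : α → E →ᵃ[ℝ] F} {g₀ : E →ᵃ[ℝ] F} {S : Set E}
    (hS : ∀ s ∈ S, Tendsto (fun n => g n s) l (𝓝 (g₀ s))) {p : E} (hp : p ∈ affineSpan ℝ S) :
    Tendsto (fun n => g n p) l (𝓝 (g₀ p)) := by
  refine affineSpan_induction hp hS fun c u v w hu hv hw => ?_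
  have hcomb (f : E →ᵃ[ℝ] F) : f (c • (u -ᵥ v) +ᵥ w) = c • (f u - f v) + f w := by
    rw [AffineMap.map_vadd, map_smul, AffineMap.linearMap_vsub]; rfl
  simp only [hcomb]
  exact ((hu.sub hv).const_smul c).add hw

section LimitMaps

variable {Y 𝔅 : Type*} [TopologicalSpace Y] [NormedAddCommGroup 𝔅]
  (σ : ℝ → Y → Y) (ψ : ℝ → 𝔅 → Y → 𝔅) (y₀ : Y) (M : Set 𝔅)

/-- The set `ℰ⁺_{y₀}`. -/
def limitMaps : Set (M → M) :=
  {ξ | ∃ tn : ℕ → ℝ, Tendsto tn atTop atTop ∧ Tendsto (fun k => σ (tn k) y₀) atTop (𝓝 y₀) ∧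
    ∀ p : M, Tendsto (fun k => ψ (tn k) p y₀) atTop (𝓝 (ξ p : 𝔅))}

def fibreOrbit (S : Set 𝔅) (t : ℝ) : Y × (S → 𝔅) :=
  (σ t y₀, fun s => ψ t s y₀)

variable {σ ψ y₀ M}

theorem exists_affineMap_of_mem_limitMaps [NormedSpace ℝ 𝔅] [FiniteDimensional ℝ 𝔅]
    (haff : ∀ t, 0 ≤ t → ∃ g : 𝔅 →ᵃ[ℝ] 𝔅, ∀ u, g u = ψ t u y₀) {ξ : M → M}
    (hξ : ξ ∈ limitMaps σ ψ y₀ M) : ∃ g : 𝔅 →ᵃ[ℝ] 𝔅, ∀ p, (ξ p : 𝔅) = g p := by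
  obtain ⟨tn, htn, -, hlim⟩ := hξ
  refine (isClosed_setOf_exists_affineMap_eq M).mem_of_tendsto (tendsto_pi_nhds.2 hlim) ?_
  filter_upwards [htn.eventually_ge_atTop 0] with k hk
  obtain ⟨g, hg⟩ := haff _ hk
  exact ⟨g, fun p => (hg p).symm⟩

theorem mapClusterPt_fibreOrbit_of_mem_limitMaps {S : Set 𝔅} (hSM : S ⊆ M) {ξ : M → M}
    (hξ : ξ ∈ limitMaps σ ψ y₀ M) :
    MapClusterPt (y₀, fun s => (ξ (inclusion hSM s) : 𝔅)) atTop (fibreOrbit σ ψ y₀ S) := by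
  obtain ⟨tn, htn, hσ, hlim⟩ := hξ
  exact (hσ.prodMk_nhds (tendsto_pi_nhds.2 fun s => hlim _)).mapClusterPt.of_comp htn

theorem mem_limitMaps_of_mapClusterPt [NormedSpace ℝ 𝔅] [FirstCountableTopology Y]
    (haff : ∀ t, 0 ≤ t → ∃ g : 𝔅 →ᵃ[ℝ] 𝔅, ∀ u, g u = ψ t u y₀) {S : Set 𝔅} (hSM : S ⊆ M)
    (hS : S.Finite) (hMS : M ⊆ affineSpan ℝ S) {ξ : M → M}
    (hξ : ∃ g : 𝔅 →ᵃ[ℝ] 𝔅, ∀ p, (ξ p : 𝔅) = g p)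
    (hcl : MapClusterPt (y₀, fun s => (ξ (inclusion hSM s) : 𝔅)) atTop
      (fibreOrbit σ ψ y₀ S)) :
    ξ ∈ limitMaps σ ψ y₀ M := by
  have := hS.to_subtype
  obtain ⟨tn, hconv, htn⟩ := hcl.exists_seq_tendsto
  obtain ⟨g, hg⟩ := hξ
  choose! G hG using haff
  have hpos : ∀ᶠ k in atTop, 0 ≤ tn k := htn.eventually_ge_atTop 0
  have hSconv : ∀ s ∈ S, Tendsto (fun k => G (tn k) s) atTop (𝓝 (g s)) := fun s hs => by
    have : Tendsto (fun k => ψ (tn k) s y₀) atTop (𝓝 (ξ (inclusion hSM ⟨s, hs⟩) : 𝔅)) :=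
      tendsto_pi_nhds.1 hconv.snd_nhds ⟨s, hs⟩
    rw [hg] at this
    exact this.congr' (hpos.mono fun k hk => (hG _ hk s).symm)
  refine ⟨tn, htn, hconv.fst_nhds, fun p => ?_⟩
  rw [hg]
  exact (tendsto_affineMap_apply_of_mem_affineSpan hSconv (hMS p.2)).congr'
    (hpos.mono fun k hk => hG _ hk p)

theorem mem_limitMaps_iff [NormedSpace ℝ 𝔅] [FiniteDimensional ℝ 𝔅] [FirstCountableTopology Y]
    (haff : ∀ t, 0 ≤ t → ∃ g : 𝔅 →ᵃ[ℝ] 𝔅, ∀ u, g u = ψ t u y₀) {S : Set 𝔅} (hSM : S ⊆ M)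
    (hS : S.Finite) (hMS : M ⊆ affineSpan ℝ S) {ξ : M → M} :
    ξ ∈ limitMaps σ ψ y₀ M ↔ (∃ g : 𝔅 →ᵃ[ℝ] 𝔅, ∀ p, (ξ p : 𝔅) = g p) ∧
      MapClusterPt (y₀, fun s => (ξ (inclusion hSM s) : 𝔅)) atTop (fibreOrbit σ ψ y₀ S) :=
  ⟨fun hξ => ⟨exists_affineMap_of_mem_limitMaps haff hξ,
      mapClusterPt_fibreOrbit_of_mem_limitMaps hSM hξ⟩,
    fun h => mem_limitMaps_of_mapClusterPt haff hSM hS hMS h.1 h.2⟩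

theorem isClosed_limitMaps [NormedSpace ℝ 𝔅] [FiniteDimensional ℝ 𝔅] [FirstCountableTopology Y]
    (haff : ∀ t, 0 ≤ t → ∃ g : 𝔅 →ᵃ[ℝ] 𝔅, ∀ u, g u = ψ t u y₀) :
    IsClosed (limitMaps σ ψ y₀ M) := by
  obtain ⟨S, hSM, hS, hMS⟩ := exists_finite_subset_subset_affineSpan M
  have hval (p : M) : Continuous fun ξ : M → M => (ξ p : 𝔅) :=
    continuous_subtype_val.comp (continuous_apply p)
  rw [show limitMaps σ ψ y₀ M = _ from Set.ext fun ξ => mem_limitMaps_iff haff hSM hS hMS]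
  exact ((isClosed_setOf_exists_affineMap_eq M).preimage (continuous_pi hval)).inter
    (isClosed_setOfPred_clusterPt.preimage
      (continuous_const.prodMk (continuous_pi fun s => hval _)))

theorem comp_mem_limitMaps [NormedSpace ℝ 𝔅] [FiniteDimensional ℝ 𝔅] [FirstCountableTopology Y]
    (hσadd : ∀ t s : ℝ, ∀ y, σ (t + s) y = σ t (σ s y)) (hσcont : ∀ t, Continuous (σ t))
    (hψadd : ∀ t τ : ℝ, 0 ≤ t → 0 ≤ τ → ∀ u y, ψ (t + τ) u y = ψ t (ψ τ u y) (σ τ y))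
    (hψcont : ∀ t, 0 ≤ t → Continuous fun q : 𝔅 × Y => ψ t q.1 q.2)
    (haff : ∀ t, 0 ≤ t → ∃ g : 𝔅 →ᵃ[ℝ] 𝔅, ∀ u, g u = ψ t u y₀) {ξ₁ ξ₂ : M → M}
    (h₁ : ξ₁ ∈ limitMaps σ ψ y₀ M) (h₂ : ξ₂ ∈ limitMaps σ ψ y₀ M) :
    ξ₁ ∘ ξ₂ ∈ limitMaps σ ψ y₀ M := by
  obtain ⟨S, hSM, hS, hMS⟩ := exists_finite_subset_subset_affineSpan M
  refine (mem_limitMaps_iff haff hSM hS hMS).2 ⟨?_, ?_⟩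
  · obtain ⟨g₁, hg₁⟩ := exists_affineMap_of_mem_limitMaps haff h₁
    obtain ⟨g₂, hg₂⟩ := exists_affineMap_of_mem_limitMaps haff h₂
    exact ⟨g₁.comp g₂, fun p => by simp [hg₁, hg₂]⟩
  obtain ⟨s, hs, hσs, hlims⟩ := h₁
  obtain ⟨t, ht, hσt, hlimt⟩ := h₂
  -- Along `s m + t n`, `n → ∞`, the orbit tends to the time-`s m` image of `(y₀, ξ₂|_S)`.
  have hcl (m : ℕ) (hm : 0 ≤ s m) : MapClusterPt
      (σ (s m) y₀, fun x : S => ψ (s m) (ξ₂ (inclusion hSM x)) y₀) atTop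
      (fibreOrbit σ ψ y₀ S) := by
    refine Tendsto.mapClusterPt ?_ |>.of_comp (tendsto_atTop_add_const_left _ (s m) ht)
    refine Tendsto.prodMk_nhds ?_ (tendsto_pi_nhds.2 fun x => ?_)
    · simpa only [Function.comp_def, fibreOrbit, hσadd] using ((hσcont _).tendsto _).comp hσt
    · refine (((hψcont _ hm).tendsto _).comp ((hlimt _).prodMk_nhds hσt)).congr' ?_
      filter_upwards [ht.eventually_ge_atTop 0] with n hn
      exact (hψadd _ _ hm hn _ _).symm
  exact isClosed_setOfPred_clusterPt.mem_of_tendsto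
    (hσs.prodMk_nhds (tendsto_pi_nhds.2 fun x => hlims _))
    ((hs.eventually_ge_atTop 0).mono hcl)

theorem exists_lipschitz_bound_limitMaps [NormedSpace ℝ 𝔅] [FiniteDimensional ℝ 𝔅]
    (haff : ∀ t, 0 ≤ t → ∃ g : 𝔅 →ᵃ[ℝ] 𝔅, ∀ u, g u = ψ t u y₀) (hM : Bornology.IsBounded M) :
    ∃ L > (0 : ℝ), ∀ ξ ∈ limitMaps σ ψ y₀ M, ∀ p q : M,
      dist (ξ p : 𝔅) (ξ q : 𝔅) ≤ L * dist (p : 𝔅) (q : 𝔅) := by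
  obtain ⟨C, hC, hCg⟩ := exists_lipschitz_bound_affineMap (F := 𝔅) M
  refine ⟨C * Metric.diam M + 1, by positivity, fun ξ hξ p q => ?_⟩
  obtain ⟨g, hg⟩ := exists_affineMap_of_mem_limitMaps haff hξ
  have hgM : ∀ x ∈ M, g x ∈ M := fun x hx => hg ⟨x, hx⟩ ▸ (ξ ⟨x, hx⟩).2
  calc dist (ξ p : 𝔅) (ξ q : 𝔅) = dist (g p) (g q) := by rw [hg, hg]
    _ ≤ C * Metric.diam M * dist (p : 𝔅) (q : 𝔅) :=
      hCg g _ Metric.diam_nonneg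
        (fun x hx y hy => Metric.dist_le_diam_of_mem hM (hgM x hx) (hgM y hy)) _ p.2 _ q.2
    _ ≤ (C * Metric.diam M + 1) * dist (p : 𝔅) (q : 𝔅) := by gcongr; linarith

end LimitMaps

theorem affine_cocycle_limit_semigroup_structure_general
    {Y : Type} [MetricSpace Y] {𝔅 : Type} [NormedAddCommGroup 𝔅]
    [NormedSpace ℝ 𝔅] [FiniteDimensional ℝ 𝔅]
    (σ : ℝ → Y → Y)
    (hσcont : Continuous (fun p : ℝ × Y => σ p.1 p.2))
    (hσadd : ∀ t s : ℝ, ∀ y, σ (t + s) y = σ t (σ s y))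
    (ψ φ : ℝ → 𝔅 → Y → 𝔅)
    (hψcont : ContinuousOn (fun p : ℝ × 𝔅 × Y => ψ p.1 p.2.1 p.2.2)
      {p : ℝ × 𝔅 × Y | 0 ≤ p.1})
    (hψadd : ∀ t τ : ℝ, 0 ≤ t → 0 ≤ τ → ∀ u y,
      ψ (t + τ) u y = ψ t (ψ τ u y) (σ τ y))
    (hφlin : ∀ t : ℝ, 0 ≤ t → ∀ y, IsLinearMap ℝ (fun u => φ t u y))
    (hlink : ∀ t : ℝ, 0 ≤ t → ∀ u v y, ψ t u y - ψ t v y = φ t (u - v) y)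
    (y₀ : Y) (u₀ : 𝔅)
    (horbit : IsCompact (closure {v : 𝔅 | ∃ t : ℝ, 0 ≤ t ∧ v = ψ t u₀ y₀}))
    (π : ℝ → 𝔅 × Y → 𝔅 × Y)
    (hπ : π = fun t p => (ψ t p.1 p.2, σ t p.2))
    (K : Set (𝔅 × Y))
    (hK : K = {p : 𝔅 × Y | ∀ T : ℝ, 0 ≤ T →
      p ∈ closure {q : 𝔅 × Y | ∃ s : ℝ, T ≤ s ∧ q = π s (u₀, y₀)}})
    (M : Set 𝔅)
    (hM : M = closure (convexHull ℝ {u : 𝔅 | (u, y₀) ∈ K}))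
    (E : Set (↥M → ↥M))
    (hE : E = {ξ | ∃ tn : ℕ → ℝ, Tendsto tn atTop atTop ∧
      Tendsto (fun k => σ (tn k) y₀) atTop (𝓝 y₀) ∧
      ∀ p : ↥M, Tendsto (fun k => ψ (tn k) p.1 y₀) atTop (𝓝 (ξ p).1)}) :
    -- (1) K is conditionally compact with respect to h = pr₂
    (IsClosed K ∧ ∀ Y' : Set Y, IsCompact (closure Y') →
      IsCompact (closure (K ∩ Prod.snd ⁻¹' Y'))) ∧
    -- (2) M is a compact convex subset of the fibre over y₀
    (IsCompact M ∧ Convex ℝ M) ∧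
    -- (3) ℰ⁺_{y₀} is a compact sub-semigroup of M^M
    (IsCompact E ∧ ∀ ξ₁ ∈ E, ∀ ξ₂ ∈ E, ξ₁ ∘ ξ₂ ∈ E) ∧
    -- (4) every ξ ∈ ℰ⁺_{y₀} is affine and Lipschitz with a uniform constant
    (∃ L > (0 : ℝ), ∀ ξ ∈ E,
      (∀ (p q : ↥M) (a b : ℝ), 0 ≤ a → 0 ≤ b → a + b = 1 →
        ∀ hm : a • (p : 𝔅) + b • (q : 𝔅) ∈ M,
          (ξ ⟨a • (p : 𝔅) + b • (q : 𝔅), hm⟩ : 𝔅) = a • (ξ p : 𝔅) + b • (ξ q : 𝔅)) ∧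
      Continuous ξ ∧
      ∀ p q : ↥M, dist (ξ p : 𝔅) (ξ q : 𝔅) ≤ L * dist (p : 𝔅) (q : 𝔅)) := by
  change E = limitMaps σ ψ y₀ M at hE
  subst hπ hE
  set C := closure {v : 𝔅 | ∃ t : ℝ, 0 ≤ t ∧ v = ψ t u₀ y₀}
  have haff (t : ℝ) (ht : 0 ≤ t) : ∃ g : 𝔅 →ᵃ[ℝ] 𝔅, ∀ u, g u = ψ t u y₀ :=
    exists_affineMap_eq_of_sub_eq _ ((hφlin t ht y₀).mk' _) fun u v => hlink t ht u v y₀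
  have hKC : K ⊆ C ×ˢ univ := fun p hp => by
    refine closure_minimal ?_ (horbit.isClosed.prod isClosed_univ) ((hK ▸ hp) 0 le_rfl)
    rintro _ ⟨s, hs, rfl⟩
    exact ⟨subset_closure ⟨s, hs, rfl⟩, trivial⟩
  have hMbdd : Bornology.IsBounded M := hM ▸ (isBounded_convexHull.2 <|
    horbit.isBounded.subset fun u hu => (hKC hu).1).closure
  have hMcpt : IsCompact M := Metric.isCompact_of_isClosed_isBounded (hM ▸ isClosed_closure) hMbdd
  have : CompactSpace M := isCompact_iff_compactSpace.1 hMcpt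
  refine ⟨⟨?_, fun _ => isCompact_closure_inter_preimage_snd horbit hKC⟩,
    ⟨hMcpt, hM ▸ (convex_convexHull ℝ _).closure⟩,
    ⟨(isClosed_limitMaps haff).isCompact, fun ξ₁ h₁ ξ₂ h₂ => ?_⟩, ?_⟩
  · simp only [hK, ofPred_forall]
    exact isClosed_iInter fun T => isClosed_iInter fun _ => isClosed_closure
  · exact comp_mem_limitMaps hσadd (fun t => hσcont.comp (.prodMk_right t)) hψadd
      (fun t ht => hψcont.comp_continuous (.prodMk_right t) fun _ => ht) haff h₁ h₂
  obtain ⟨L, hL, hLip⟩ := exists_lipschitz_bound_limitMaps haff hMbdd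
  refine ⟨L, hL, fun ξ hξ => ?_⟩
  obtain ⟨g, hg⟩ := exists_affineMap_of_mem_limitMaps haff hξ
  exact ⟨fun p q a b _ _ hab hm => by simp only [hg]; exact Convex.combo_affine_apply hab,
    continuous_of_exists_affineMap_eq ⟨g, hg⟩, hLip ξ hξ⟩

/-- Structure lemma for an affine cocycle `ψ` (with associated linear cocycle `φ`)
over a flow `(Y, ℝ, σ)` with finite-dimensional Banach fibre `𝔅`, a positively
Poisson stable point `y₀`, and a point `u₀` with relatively compact forward orbit:
(1) the ω-limit set `K` of `x₀ = (u₀, y₀)` in the skew product is conditionally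
compact with respect to `h = pr₂`; (2) `M = cl co K_{y₀}` is a compact convex subset
of the fibre over `y₀`; (3) the set `ℰ⁺_{y₀}` of pointwise limits on `M` of the maps
`π(t_n, ·)` along sequences in `𝔑_{y₀}^{+∞}` is a compact sub-semigroup of `M^M`;
(4) every `ξ ∈ ℰ⁺_{y₀}` is affine and Lipschitz (hence continuous) with a constant
independent of `ξ`. -/
theorem affine_cocycle_limit_semigroup_structure
    {Y : Type} [MetricSpace Y] {𝔅 : Type} [NormedAddCommGroup 𝔅]
    [NormedSpace ℝ 𝔅] [FiniteDimensional ℝ 𝔅]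
    (σ : ℝ → Y → Y)
    (hσcont : Continuous (fun p : ℝ × Y => σ p.1 p.2))
    (hσ0 : ∀ y, σ 0 y = y)
    (hσadd : ∀ t s : ℝ, ∀ y, σ (t + s) y = σ t (σ s y))
    (ψ φ : ℝ → 𝔅 → Y → 𝔅)
    (hψcont : ContinuousOn (fun p : ℝ × 𝔅 × Y => ψ p.1 p.2.1 p.2.2)
      {p : ℝ × 𝔅 × Y | 0 ≤ p.1})
    (hψ0 : ∀ u y, ψ 0 u y = u)
    (hψadd : ∀ t τ : ℝ, 0 ≤ t → 0 ≤ τ → ∀ u y,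
      ψ (t + τ) u y = ψ t (ψ τ u y) (σ τ y))
    (hφcont : ContinuousOn (fun p : ℝ × 𝔅 × Y => φ p.1 p.2.1 p.2.2)
      {p : ℝ × 𝔅 × Y | 0 ≤ p.1})
    (hφ0 : ∀ u y, φ 0 u y = u)
    (hφadd : ∀ t τ : ℝ, 0 ≤ t → 0 ≤ τ → ∀ u y,
      φ (t + τ) u y = φ t (φ τ u y) (σ τ y))
    (hφlin : ∀ t : ℝ, 0 ≤ t → ∀ y, IsLinearMap ℝ (fun u => φ t u y))
    (hlink : ∀ t : ℝ, 0 ≤ t → ∀ u v y, ψ t u y - ψ t v y = φ t (u - v) y)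
    (y₀ : Y) (u₀ : 𝔅)
    (hPoisson : ∃ tn : ℕ → ℝ, Tendsto tn atTop atTop ∧
      Tendsto (fun k => σ (tn k) y₀) atTop (𝓝 y₀))
    (horbit : IsCompact (closure {v : 𝔅 | ∃ t : ℝ, 0 ≤ t ∧ v = ψ t u₀ y₀}))
    (π : ℝ → 𝔅 × Y → 𝔅 × Y)
    (hπ : π = fun t p => (ψ t p.1 p.2, σ t p.2))
    (K : Set (𝔅 × Y))
    (hK : K = {p : 𝔅 × Y | ∀ T : ℝ, 0 ≤ T →
      p ∈ closure {q : 𝔅 × Y | ∃ s : ℝ, T ≤ s ∧ q = π s (u₀, y₀)}})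
    (M : Set 𝔅)
    (hM : M = closure (convexHull ℝ {u : 𝔅 | (u, y₀) ∈ K}))
    (E : Set (↥M → ↥M))
    (hE : E = {ξ | ∃ tn : ℕ → ℝ, Tendsto tn atTop atTop ∧
      Tendsto (fun k => σ (tn k) y₀) atTop (𝓝 y₀) ∧
      ∀ p : ↥M, Tendsto (fun k => ψ (tn k) p.1 y₀) atTop (𝓝 (ξ p).1)}) :
    -- (1) K is conditionally compact with respect to h = pr₂
    (IsClosed K ∧ ∀ Y' : Set Y, IsCompact (closure Y') →
      IsCompact (closure (K ∩ Prod.snd ⁻¹' Y'))) ∧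
    -- (2) M is a compact convex subset of the fibre over y₀
    (IsCompact M ∧ Convex ℝ M) ∧
    -- (3) ℰ⁺_{y₀} is a compact sub-semigroup of M^M
    (IsCompact E ∧ ∀ ξ₁ ∈ E, ∀ ξ₂ ∈ E, ξ₁ ∘ ξ₂ ∈ E) ∧
    -- (4) every ξ ∈ ℰ⁺_{y₀} is affine and Lipschitz with a uniform constant
    (∃ L > (0 : ℝ), ∀ ξ ∈ E,
      (∀ (p q : ↥M) (a b : ℝ), 0 ≤ a → 0 ≤ b → a + b = 1 →
        ∀ hm : a • (p : 𝔅) + b • (q : 𝔅) ∈ M,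
          (ξ ⟨a • (p : 𝔅) + b • (q : 𝔅), hm⟩ : 𝔅) = a • (ξ p : 𝔅) + b • (ξ q : 𝔅)) ∧
      Continuous ξ ∧
      ∀ p q : ↥M, dist (ξ p : 𝔅) (ξ q : 𝔅) ≤ L * dist (p : 𝔅) (q : 𝔅)) :=
  affine_cocycle_limit_semigroup_structure_general σ hσcont hσadd ψ φ hψcont hψadd hφlin hlink y₀ u₀
    horbit π hπ K hK M hM E hE
end

section
/- Let 𝔅 be a finite-dimensional Banach space, A : ℝ → L(𝔅, 𝔅) and f : ℝ → 𝔅 continuous, and suppose the pair (A, f), regarded as an element of C(ℝ, L(𝔅,𝔅) × 𝔅), is τ-periodic, i.e. A(t + τ) = A(t) and f(t + τ) = f(t) for all t ∈ ℝ. If the equation x'(t) = A(t)x(t) + f(t) has a solution bounded on ℝ₊, then it has at least one τ-periodic solution. -/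
/-!
Averaging the translates `x (· + k * τ)`, `k < n`, of the bounded solution `x` gives solutions
`cₙ` with `cₙ 0` bounded and `cₙ (t + τ) - cₙ t = (x (t + n * τ) - x t) / n → 0`. Differences of
solutions solve the homogeneous equation, whose solutions form a finite-dimensional space since
they are determined by their value at `0`. Hence convergence of `cₙ 0` along a subsequence
forces pointwise convergence of `cₙ` to a solution, and that solution is `τ`-periodic.
-/

open Filter Topology Set

variable {𝔅 : Type*} [NormedAddCommGroup 𝔅] [NormedSpace ℝ 𝔅]

def homogeneousSolutions (A : ℝ → 𝔅 →L[ℝ] 𝔅) : Submodule ℝ (ℝ → 𝔅) where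
  carrier := {u | ∀ t, HasDerivAt u (A t (u t)) t}
  add_mem' hu hv t := by simpa using (hu t).add (hv t)
  zero_mem' t := by simp
  smul_mem' c _ hu t := by simpa using (hu t).const_smul c

section Solutions

variable {A : ℝ → 𝔅 →L[ℝ] 𝔅} {f : ℝ → 𝔅}

theorem sub_mem_homogeneousSolutions {x y : ℝ → 𝔅}
    (hx : ∀ t, HasDerivAt x (A t (x t) + f t) t) (hy : ∀ t, HasDerivAt y (A t (y t) + f t) t) :
    x - y ∈ homogeneousSolutions A := fun t => by
  simpa [map_sub] using (hx t).sub (hy t)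

theorem hasDerivAt_add_of_mem_homogeneousSolutions {x u : ℝ → 𝔅}
    (hx : ∀ t, HasDerivAt x (A t (x t) + f t) t) (hu : u ∈ homogeneousSolutions A) (t : ℝ) :
    HasDerivAt (x + u) (A t ((x + u) t) + f t) t := by
  convert (hx t).add (hu t) using 1
  simp only [Pi.add_apply, map_add]
  abel

theorem eq_zero_of_mem_homogeneousSolutions (hA : Continuous A) {u : ℝ → 𝔅}
    (hu : u ∈ homogeneousSolutions A) (h0 : u 0 = 0) : u = 0 := by
  funext t
  obtain ⟨M, hM⟩ := (isCompact_Icc (a := -(|t| + 1)) (b := |t| + 1)).exists_bound_of_continuousOn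
    hA.continuousOn
  have hLip : ∀ s ∈ Ioo (-(|t| + 1)) (|t| + 1), LipschitzOnWith M.toNNReal (A s) univ :=
    fun s hs => (ContinuousLinearMap.lipschitzWith_of_opNorm_le
      ((hM s (Ioo_subset_Icc_self hs)).trans M.le_coe_toNNReal)).lipschitzOnWith
  have hmem : ∀ s : ℝ, s ∈ Ioo (-(|t| + 1)) (|t| + 1) ↔ |s| < |t| + 1 := fun s => abs_lt.symm
  exact ODE_solution_unique_of_mem_Ioo hLip ((hmem 0).2 (by rw [abs_zero]; positivity))
    (fun s _ => ⟨hu s, mem_univ _⟩)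
    (fun s _ => ⟨(homogeneousSolutions A).zero_mem s, mem_univ _⟩) h0 ((hmem t).2 (by linarith))

theorem tendsto_of_tendsto_apply_zero [FiniteDimensional ℝ 𝔅] (hA : Continuous A)
    {ι : Type*} {l : Filter ι} [l.NeBot] {u : ι → ℝ → 𝔅}
    (hu : ∀ i, u i ∈ homogeneousSolutions A) {v : 𝔅}
    (hv : Tendsto (fun i => u i 0) l (𝓝 v)) :
    ∃ g ∈ homogeneousSolutions A, Tendsto u l (𝓝 g) := by
  let evalZero : homogeneousSolutions A →ₗ[ℝ] 𝔅 :=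
    (LinearMap.proj 0).comp (homogeneousSolutions A).subtype
  have hev : LinearMap.ker evalZero = ⊥ := LinearMap.ker_eq_bot.2 fun g h hgh => Subtype.ext <| by
    simpa [sub_eq_zero] using eq_zero_of_mem_homogeneousSolutions hA (sub_mem g.2 h.2)
      (by simpa [evalZero, sub_eq_zero] using hgh)
  have : FiniteDimensional ℝ (homogeneousSolutions A) :=
    Module.Finite.of_injective evalZero (LinearMap.ker_eq_bot.1 hev)
  -- `homogeneousSolutions A` carries the topology of pointwise convergence from `ℝ → 𝔅`.
  have hemb := LinearMap.isClosedEmbedding_of_injective hev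
  obtain ⟨g, rfl⟩ : v ∈ range evalZero :=
    hemb.isClosed_range.mem_of_tendsto hv (Eventually.of_forall fun i => ⟨⟨u i, hu i⟩, rfl⟩)
  have : Tendsto (fun i => (⟨u i, hu i⟩ : homogeneousSolutions A)) l (𝓝 g) :=
    hemb.isEmbedding.tendsto_nhds_iff.2 hv
  exact ⟨g, g.2, (continuous_subtype_val.tendsto g).comp this⟩

end Solutions

section TranslateAverage

open Finset

noncomputable def translateAverage (x : ℝ → 𝔅) (τ : ℝ) (n : ℕ) (t : ℝ) : 𝔅 :=
  (n : ℝ)⁻¹ • ∑ k ∈ range n, x (t + k * τ)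

variable {A : ℝ → 𝔅 →L[ℝ] 𝔅} {f x : ℝ → 𝔅} {τ : ℝ}

theorem translateAverage_add_sub (x : ℝ → 𝔅) (τ : ℝ) (n : ℕ) (t : ℝ) :
    translateAverage x τ n (t + τ) - translateAverage x τ n t =
      (n : ℝ)⁻¹ • (x (t + n * τ) - x t) := by
  have hshift : ∀ k : ℕ, x (t + τ + k * τ) = x (t + (k + 1 : ℕ) * τ) := fun k => by
    push_cast; ring_nf
  simp only [translateAverage, ← smul_sub, hshift, ← sum_sub_distrib,
    sum_range_sub (fun k : ℕ => x (t + k * τ)), Nat.cast_zero, zero_mul, add_zero]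

theorem norm_translateAverage_le {C : ℝ} (hτ : 0 ≤ τ) (hC : ∀ s, 0 ≤ s → ‖x s‖ ≤ C) (n : ℕ)
    {t : ℝ} (ht : 0 ≤ t) : ‖translateAverage x τ n t‖ ≤ C := by
  rcases n.eq_zero_or_pos with rfl | hn
  · simpa [translateAverage] using (norm_nonneg _).trans (hC 0 le_rfl)
  have hsum : ‖∑ k ∈ range n, x (t + k * τ)‖ ≤ n * C :=
    calc _ ≤ ∑ k ∈ range n, ‖x (t + k * τ)‖ := norm_sum_le _ _
      _ ≤ ∑ _k ∈ range n, C := sum_le_sum fun k _ => hC _ (by positivity)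
      _ = n * C := by simp
  rwa [translateAverage, norm_smul, Real.norm_of_nonneg (by positivity),
    inv_mul_le_iff₀ (by positivity)]

theorem tendsto_translateAverage_add_sub {C : ℝ} (hτ : 0 < τ) (hC : ∀ s, 0 ≤ s → ‖x s‖ ≤ C)
    (t : ℝ) :
    Tendsto (fun n => translateAverage x τ n (t + τ) - translateAverage x τ n t) atTop (𝓝 0) := by
  simp_rw [translateAverage_add_sub]
  refine tendsto_inv_atTop_zero.comp tendsto_natCast_atTop_atTop |>.zero_smul_isBoundedUnder_le
    (isBoundedUnder_of_eventually_le (a := C + ‖x t‖) ?_)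
  have hlarge : Tendsto (fun n : ℕ => t + n * τ) atTop atTop :=
    tendsto_atTop_add_const_left _ t (tendsto_natCast_atTop_atTop.atTop_mul_const hτ)
  filter_upwards [hlarge.eventually_ge_atTop 0] with n hn
  exact (norm_sub_le _ _).trans (add_le_add_left (hC _ hn) _)

theorem hasDerivAt_comp_add_nat_mul (hAper : Function.Periodic A τ)
    (hfper : Function.Periodic f τ) (hx : ∀ t, HasDerivAt x (A t (x t) + f t) t) (k : ℕ)
    (t : ℝ) : HasDerivAt (fun s => x (s + k * τ)) (A t (x (t + k * τ)) + f t) t := by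
  rw [← hAper.nat_mul k t, ← hfper.nat_mul k t]
  exact (hx _).comp_add_const t _

theorem hasDerivAt_translateAverage (hAper : Function.Periodic A τ)
    (hfper : Function.Periodic f τ) (hx : ∀ t, HasDerivAt x (A t (x t) + f t) t) {n : ℕ}
    (hn : n ≠ 0) (t : ℝ) :
    HasDerivAt (translateAverage x τ n) (A t (translateAverage x τ n t) + f t) t := by
  refine ((HasDerivAt.fun_sum (u := range n) fun k _ =>
    hasDerivAt_comp_add_nat_mul hAper hfper hx k t).fun_const_smul (n : ℝ)⁻¹).congr_deriv ?_
  rw [translateAverage, map_smul, map_sum, sum_add_distrib, smul_add, sum_const, card_range,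
    ← Nat.cast_smul_eq_nsmul ℝ, inv_smul_smul₀ (Nat.cast_ne_zero.2 hn)]

end TranslateAverage

theorem exists_periodic_solution_of_pos [FiniteDimensional ℝ 𝔅] {A : ℝ → 𝔅 →L[ℝ] 𝔅}
    {f x : ℝ → 𝔅} {τ C : ℝ} (hA : Continuous A) (hAper : Function.Periodic A τ)
    (hfper : Function.Periodic f τ) (hτ : 0 < τ) (hx : ∀ t, HasDerivAt x (A t (x t) + f t) t)
    (hC : ∀ t, 0 ≤ t → ‖x t‖ ≤ C) :
    ∃ y : ℝ → 𝔅, (∀ t, HasDerivAt y (A t (y t) + f t) t) ∧ Function.Periodic y τ := by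
  set c : ℕ → ℝ → 𝔅 := fun n => translateAverage x τ (n + 1)
  have hc : ∀ n t, HasDerivAt (c n) (A t (c n t) + f t) t := fun n =>
    hasDerivAt_translateAverage hAper hfper hx n.succ_ne_zero
  obtain ⟨v, -, φ, hφ, hv⟩ := tendsto_subseq_of_bounded (Metric.isBounded_closedBall (x := 0))
    fun n => mem_closedBall_zero_iff.2 (norm_translateAverage_le hτ.le hC (n + 1) le_rfl)
  obtain ⟨g, hg, hlim⟩ := tendsto_of_tendsto_apply_zero hA
    (fun j => sub_mem_homogeneousSolutions (hc (φ j)) hx) (hv.sub_const (x 0))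
  refine ⟨x + g, hasDerivAt_add_of_mem_homogeneousSolutions hx hg, fun t => ?_⟩
  have hcg : Tendsto (fun j => c (φ j)) atTop (𝓝 (x + g)) := by
    simpa using hlim.const_add x
  have hlim_sub := (tendsto_pi_nhds.1 hcg (t + τ)).sub (tendsto_pi_nhds.1 hcg t)
  have hlim_zero := (tendsto_translateAverage_add_sub hτ hC t).comp
    ((tendsto_add_atTop_nat 1).comp hφ.tendsto_atTop)
  exact sub_eq_zero.1 (tendsto_nhds_unique hlim_sub hlim_zero)

theorem periodic_solution_of_periodic_coefficients_general
    {𝔅 : Type} [NormedAddCommGroup 𝔅] [NormedSpace ℝ 𝔅] [FiniteDimensional ℝ 𝔅]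
    (A : ℝ → (𝔅 →L[ℝ] 𝔅)) (f : ℝ → 𝔅) (τ : ℝ)
    (hA : Continuous A)
    (hAper : ∀ t : ℝ, A (t + τ) = A t) (hfper : ∀ t : ℝ, f (t + τ) = f t)
    (hbdd : ∃ (x : ℝ → 𝔅) (C : ℝ),
      (∀ t : ℝ, HasDerivAt x (A t (x t) + f t) t) ∧ ∀ t : ℝ, 0 ≤ t → ‖x t‖ ≤ C) :
    ∃ x : ℝ → 𝔅, (∀ t : ℝ, HasDerivAt x (A t (x t) + f t) t) ∧
      ∀ t : ℝ, x (t + τ) = x t := by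
  obtain ⟨x, C, hx, hC⟩ := hbdd
  rcases lt_trichotomy τ 0 with hτ | rfl | hτ
  · obtain ⟨y, hy, hyper⟩ := exists_periodic_solution_of_pos hA (Function.Periodic.neg hAper)
      (Function.Periodic.neg hfper) (neg_pos.2 hτ) hx hC
    exact ⟨y, hy, by simpa using hyper.neg⟩
  · exact ⟨x, hx, fun t => by rw [add_zero]⟩
  · exact exists_periodic_solution_of_pos hA hAper hfper hτ hx hC

/-- Massera-type theorem: if the pair `(A, f)` is `τ`-periodic and the equation
`x' = A(t)x + f(t)` (fibre a finite-dimensional Banach space) has a solution bounded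
on `ℝ₊`, then it has at least one `τ`-periodic solution. -/
theorem periodic_solution_of_periodic_coefficients
    {𝔅 : Type} [NormedAddCommGroup 𝔅] [NormedSpace ℝ 𝔅] [FiniteDimensional ℝ 𝔅]
    (A : ℝ → (𝔅 →L[ℝ] 𝔅)) (f : ℝ → 𝔅) (τ : ℝ)
    (hA : Continuous A) (hf : Continuous f)
    (hAper : ∀ t : ℝ, A (t + τ) = A t) (hfper : ∀ t : ℝ, f (t + τ) = f t)
    (hbdd : ∃ (x : ℝ → 𝔅) (C : ℝ),
      (∀ t : ℝ, HasDerivAt x (A t (x t) + f t) t) ∧ ∀ t : ℝ, 0 ≤ t → ‖x t‖ ≤ C) :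
    ∃ x : ℝ → 𝔅, (∀ t : ℝ, HasDerivAt x (A t (x t) + f t) t) ∧
      ∀ t : ℝ, x (t + τ) = x t :=
  periodic_solution_of_periodic_coefficients_general A f τ hA hAper hfper hbdd
end
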